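/- arXiv:1809.05416 — 3 statements merged into one kernel-verified Lean document; each statement's English description precedes it below -/
import Mathlib

section
/- Let p, q, t₁,…,t₈ ∈ ℂ∖{0} satisfy the balancing condition ∏_{j=1}^8 t_j = p²q², and suppose that every multiplicative relation among t₁,…,t₈, p, q is induced by the balancing condition, i.e., whenever β₁,…,β₈, m, n ∈ ℤ satisfy ∏_{j=1}^8 t_j^{β_j} = p^m q^n, there exists β ∈ ℤ with β₁ = ⋯ = β₈ = β and m = n = 2β. Let c ∈ ℂ∖{0} with c² = t₆·t₇, and set ε_j := q/(c·t_j) for j = 1,…,5, ε₆ := p⁴·c·t₈, and ε₇ := c/(q·t₈). Then whenever α₁,…,α₇, m, n ∈ ℤ satisfy ∏_{j=1}^7 ε_j^{α_j} = p^m q^n, there exists α ∈ ℤ such that α₁ = ⋯ = α₆ = α = n and m = α₇ = 2α. -/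
/-!
Squaring a relation among the `εⱼ` makes the exponent of `c` even, so `c² = t₆ t₇` turns it
into a relation among `t₁, …, t₈, p, q`. By hypothesis the exponents of that relation are all
equal, a linear system in the `αⱼ, m, n` whose only solutions are the stated ones.
-/

section CommGroup

variable {G : Type*} [CommGroup G]

theorem t_relation_of_eps_relation (p q t₁ t₂ t₃ t₄ t₅ t₆ t₇ t₈ c : G)
    (hc2 : c ^ 2 = t₆ * t₇) (α₁ α₂ α₃ α₄ α₅ α₆ α₇ m n : ℤ)
    (h : (q / (c * t₁)) ^ α₁ * (q / (c * t₂)) ^ α₂ * (q / (c * t₃)) ^ α₃ *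
      (q / (c * t₄)) ^ α₄ * (q / (c * t₅)) ^ α₅ * (p ^ 4 * c * t₈) ^ α₆ * (c / (q * t₈)) ^ α₇
        = p ^ m * q ^ n) :
    t₁ ^ (-(2 * α₁)) * t₂ ^ (-(2 * α₂)) * t₃ ^ (-(2 * α₃)) * t₄ ^ (-(2 * α₄)) *
      t₅ ^ (-(2 * α₅)) * t₆ ^ (α₆ + α₇ - (α₁ + α₂ + α₃ + α₄ + α₅)) *
      t₇ ^ (α₆ + α₇ - (α₁ + α₂ + α₃ + α₄ + α₅)) * t₈ ^ (2 * (α₆ - α₇))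
        = p ^ (2 * m - 8 * α₆) * q ^ (2 * n - 2 * (α₁ + α₂ + α₃ + α₄ + α₅) + 2 * α₇) := by
  apply Additive.ofMul.injective
  have h' := congrArg Additive.ofMul h
  have hc2' := congrArg Additive.ofMul hc2
  simp only [ofMul_mul, ofMul_div, ofMul_zpow, ofMul_pow] at h' hc2' ⊢
  linear_combination (norm := module)
    (2 : ℤ) • h' - (α₆ + α₇ - (α₁ + α₂ + α₃ + α₄ + α₅)) • hc2'

theorem eps_relation_exponents (p q t₁ t₂ t₃ t₄ t₅ t₆ t₇ t₈ c : G)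
    (hrel : ∀ β₁ β₂ β₃ β₄ β₅ β₆ β₇ β₈ m n : ℤ,
      t₁ ^ β₁ * t₂ ^ β₂ * t₃ ^ β₃ * t₄ ^ β₄ * t₅ ^ β₅ * t₆ ^ β₆ * t₇ ^ β₇ * t₈ ^ β₈
        = p ^ m * q ^ n →
      ∃ β : ℤ, β₁ = β ∧ β₂ = β ∧ β₃ = β ∧ β₄ = β ∧ β₅ = β ∧ β₆ = β ∧ β₇ = β ∧ β₈ = β ∧
        m = 2 * β ∧ n = 2 * β)
    (hc2 : c ^ 2 = t₆ * t₇) (α₁ α₂ α₃ α₄ α₅ α₆ α₇ m n : ℤ)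
    (h : (q / (c * t₁)) ^ α₁ * (q / (c * t₂)) ^ α₂ * (q / (c * t₃)) ^ α₃ *
      (q / (c * t₄)) ^ α₄ * (q / (c * t₅)) ^ α₅ * (p ^ 4 * c * t₈) ^ α₆ * (c / (q * t₈)) ^ α₇
        = p ^ m * q ^ n) :
    ∃ α : ℤ, α₁ = α ∧ α₂ = α ∧ α₃ = α ∧ α₄ = α ∧ α₅ = α ∧ α₆ = α ∧
      α = n ∧ m = 2 * α ∧ α₇ = 2 * α := by
  obtain ⟨β, h₁, h₂, h₃, h₄, h₅, h₆, h₇, h₈, hm, hn⟩ :=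
    hrel _ _ _ _ _ _ _ _ _ _ (t_relation_of_eps_relation p q t₁ t₂ t₃ t₄ t₅ t₆ t₇ t₈ c
      hc2 α₁ α₂ α₃ α₄ α₅ α₆ α₇ m n h)
  exact ⟨α₁, rfl, by omega, by omega, by omega, by omega, by omega, by omega, by omega, by omega⟩

end CommGroup

theorem elliptic_hypergeometric_multiplicative_relations_general
    (p q t₁ t₂ t₃ t₄ t₅ t₆ t₇ t₈ c : ℂ)
    (hp : p ≠ 0) (hq : q ≠ 0)
    (ht₁ : t₁ ≠ 0) (ht₂ : t₂ ≠ 0) (ht₃ : t₃ ≠ 0) (ht₄ : t₄ ≠ 0)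
    (ht₅ : t₅ ≠ 0) (ht₆ : t₆ ≠ 0) (ht₇ : t₇ ≠ 0) (ht₈ : t₈ ≠ 0)
    (hc : c ≠ 0)
    (hrel : ∀ β₁ β₂ β₃ β₄ β₅ β₆ β₇ β₈ m n : ℤ,
      t₁ ^ β₁ * t₂ ^ β₂ * t₃ ^ β₃ * t₄ ^ β₄ * t₅ ^ β₅ * t₆ ^ β₆ * t₇ ^ β₇ * t₈ ^ β₈
        = p ^ m * q ^ n →
      ∃ β : ℤ, β₁ = β ∧ β₂ = β ∧ β₃ = β ∧ β₄ = β ∧ β₅ = β ∧ β₆ = β ∧ β₇ = β ∧ β₈ = β ∧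
        m = 2 * β ∧ n = 2 * β)
    (hc2 : c ^ 2 = t₆ * t₇)
    (ε₁ ε₂ ε₃ ε₄ ε₅ ε₆ ε₇ : ℂ)
    (he₁ : ε₁ = q / (c * t₁)) (he₂ : ε₂ = q / (c * t₂)) (he₃ : ε₃ = q / (c * t₃))
    (he₄ : ε₄ = q / (c * t₄)) (he₅ : ε₅ = q / (c * t₅))
    (he₆ : ε₆ = p ^ 4 * c * t₈) (he₇ : ε₇ = c / (q * t₈)) :
    ∀ α₁ α₂ α₃ α₄ α₅ α₆ α₇ m n : ℤ,
      ε₁ ^ α₁ * ε₂ ^ α₂ * ε₃ ^ α₃ * ε₄ ^ α₄ * ε₅ ^ α₅ * ε₆ ^ α₆ * ε₇ ^ α₇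
        = p ^ m * q ^ n →
      ∃ α : ℤ, α₁ = α ∧ α₂ = α ∧ α₃ = α ∧ α₄ = α ∧ α₅ = α ∧ α₆ = α ∧
        α = n ∧ m = 2 * α ∧ α₇ = 2 * α := by
  intro α₁ α₂ α₃ α₄ α₅ α₆ α₇ m n h
  subst he₁ he₂ he₃ he₄ he₅ he₆ he₇
  lift p to ℂˣ using hp.isUnit
  lift q to ℂˣ using hq.isUnit
  lift t₁ to ℂˣ using ht₁.isUnit
  lift t₂ to ℂˣ using ht₂.isUnit
  lift t₃ to ℂˣ using ht₃.isUnit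
  lift t₄ to ℂˣ using ht₄.isUnit
  lift t₅ to ℂˣ using ht₅.isUnit
  lift t₆ to ℂˣ using ht₆.isUnit
  lift t₇ to ℂˣ using ht₇.isUnit
  lift t₈ to ℂˣ using ht₈.isUnit
  lift c to ℂˣ using hc.isUnit
  norm_cast at hrel hc2 h
  exact eps_relation_exponents p q t₁ t₂ t₃ t₄ t₅ t₆ t₇ t₈ c hrel hc2 α₁ α₂ α₃ α₄ α₅ α₆ α₇ m n h

/-- **Lemma 3 of the paper.**  If every multiplicative relation among
`t₁, …, t₈, p, q` is induced by the balancing condition `∏ tⱼ = p² q²`, and the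
parameters `ε₁, …, ε₇` are defined by the reparametrization
`εⱼ = q/(c tⱼ)` for `j = 1, …, 5`, `ε₆ = p⁴ c t₈`, `ε₇ = c/(q t₈)` with `c² = t₆ t₇`,
then every multiplicative relation `∏_{j=1}^7 εⱼ^{αⱼ} = pᵐ qⁿ` satisfies
`α₁ = ⋯ = α₆ = α = n` and `m = α₇ = 2α` for some `α ∈ ℤ`. -/
theorem elliptic_hypergeometric_multiplicative_relations
    (p q t₁ t₂ t₃ t₄ t₅ t₆ t₇ t₈ c : ℂ)
    (hp : p ≠ 0) (hq : q ≠ 0)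
    (ht₁ : t₁ ≠ 0) (ht₂ : t₂ ≠ 0) (ht₃ : t₃ ≠ 0) (ht₄ : t₄ ≠ 0)
    (ht₅ : t₅ ≠ 0) (ht₆ : t₆ ≠ 0) (ht₇ : t₇ ≠ 0) (ht₈ : t₈ ≠ 0)
    (hc : c ≠ 0)
    (hbal : t₁ * t₂ * t₃ * t₄ * t₅ * t₆ * t₇ * t₈ = p ^ 2 * q ^ 2)
    (hrel : ∀ β₁ β₂ β₃ β₄ β₅ β₆ β₇ β₈ m n : ℤ,
      t₁ ^ β₁ * t₂ ^ β₂ * t₃ ^ β₃ * t₄ ^ β₄ * t₅ ^ β₅ * t₆ ^ β₆ * t₇ ^ β₇ * t₈ ^ β₈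
        = p ^ m * q ^ n →
      ∃ β : ℤ, β₁ = β ∧ β₂ = β ∧ β₃ = β ∧ β₄ = β ∧ β₅ = β ∧ β₆ = β ∧ β₇ = β ∧ β₈ = β ∧
        m = 2 * β ∧ n = 2 * β)
    (hc2 : c ^ 2 = t₆ * t₇)
    (ε₁ ε₂ ε₃ ε₄ ε₅ ε₆ ε₇ : ℂ)
    (he₁ : ε₁ = q / (c * t₁)) (he₂ : ε₂ = q / (c * t₂)) (he₃ : ε₃ = q / (c * t₃))
    (he₄ : ε₄ = q / (c * t₄)) (he₅ : ε₅ = q / (c * t₅))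
    (he₆ : ε₆ = p ^ 4 * c * t₈) (he₇ : ε₇ = c / (q * t₈)) :
    ∀ α₁ α₂ α₃ α₄ α₅ α₆ α₇ m n : ℤ,
      ε₁ ^ α₁ * ε₂ ^ α₂ * ε₃ ^ α₃ * ε₄ ^ α₄ * ε₅ ^ α₅ * ε₆ ^ α₆ * ε₇ ^ α₇
        = p ^ m * q ^ n →
      ∃ α : ℤ, α₁ = α ∧ α₂ = α ∧ α₃ = α ∧ α₄ = α ∧ α₅ = α ∧ α₆ = α ∧
        α = n ∧ m = 2 * α ∧ α₇ = 2 * α :=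
  elliptic_hypergeometric_multiplicative_relations_general p q t₁ t₂ t₃ t₄ t₅ t₆ t₇ t₈ c hp hq ht₁
    ht₂ ht₃ ht₄ ht₅ ht₆ ht₇ ht₈ hc hrel hc2 ε₁ ε₂ ε₃ ε₄ ε₅ ε₆ ε₇ he₁ he₂ he₃ he₄ he₅ he₆ he₇
end

section
/- Let p, q ∈ ℂ∖{0} with |p| < 1, |q| < 1, p^ℤ ∩ q^ℤ = {1}, and let ε₁,…,ε₈ ∈ ℂ∖{0} satisfy ∏_{j=1}^8 ε_j = p²q². Assume hypothesis (A) or hypothesis (B). Fix s, t ∈ ℂ with s² = q and t² = p. Then the 24 complex numbers q⁻¹ε_j and q⁻¹ε_j⁻¹ for j = 1,…,8, together with s⁻¹, −s⁻¹, s⁻¹t, −s⁻¹t, s⁻³, −s⁻³, s⁻³t, −s⁻³t, are pairwise distinct modulo p^ℤ (i.e., the ratio of any two distinct ones is not an integer power of p); moreover, for every nonzero integer ℓ, the number q^{ℓ−1}·ε₁ is not congruent modulo p^ℤ to any of these 24 numbers. -/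
/-- Hypothesis (A): every multiplicative relation among `ε₁, …, ε₈, p, q` is induced
by the balancing condition `∏ εⱼ = p² q²`. -/
def HypA (p q : ℂ) (ε : Fin 8 → ℂ) : Prop :=
  ∀ (α : Fin 8 → ℤ) (m n : ℤ), (∏ j, ε j ^ α j) = p ^ m * q ^ n →
    ∃ a : ℤ, (∀ j, α j = a) ∧ m = 2 * a ∧ n = 2 * a

/-- Hypothesis (B): `ε₈ = q ε₇` and every multiplicative relation among
`ε₁, …, ε₈, p, q` is induced by the special balancing condition. -/
def HypB (p q : ℂ) (ε : Fin 8 → ℂ) : Prop :=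
  ε 7 = q * ε 6 ∧
  ∀ (α : Fin 8 → ℤ) (m n : ℤ), (∏ j, ε j ^ α j) = p ^ m * q ^ n →
    ∃ a : ℤ, (∀ j : Fin 8, (j : ℕ) < 6 → α j = a) ∧ a = n - α 7 ∧
      α 6 + α 7 = 2 * a ∧ m = 2 * a

/-- The 24 numbers `q⁻¹ εⱼ`, `q⁻¹ εⱼ⁻¹` (`j = 1, …, 8`), `±s⁻¹`, `±s⁻¹ t`, `±s⁻³`,
`±s⁻³ t`, where `s² = q` and `t² = p`: possible zeros and poles of the coefficient `b`
of the elliptic hypergeometric equation. -/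
noncomputable def polesAndZeros (q s t : ℂ) (ε : Fin 8 → ℂ) : Fin 24 → ℂ :=
  fun i =>
    if h : (i : ℕ) < 8 then q⁻¹ * ε ⟨(i : ℕ), h⟩
    else if h2 : (i : ℕ) < 16 then q⁻¹ * (ε ⟨(i : ℕ) - 8, by omega⟩)⁻¹
    else
      ![s⁻¹, -s⁻¹, s⁻¹ * t, -(s⁻¹ * t), (s ^ 3)⁻¹, -(s ^ 3)⁻¹, (s ^ 3)⁻¹ * t,
        -((s ^ 3)⁻¹ * t)] ⟨(i : ℕ) - 16, by have := i.isLt; omega⟩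

/-!
Each of the first sixteen numbers is `q⁻¹ εⱼ^{±1}`, so a congruence between two of them, or
with `q^{ℓ-1} ε₁`, is a relation `εᵢ^e εⱼ^{e'} ∈ p^ℤ q^ℤ`. Both (A) and (B) say that the exponent
vector of such a relation equals some `a` on the first six indices and sums to `8 a`. For
`e, e' = ±1` this leaves, besides the trivial `εᵢ^{±1} εᵢ^{∓1}`, only `ε₇^{±1} ε₈^{∓1}` with a
nonzero power of `q`, which fits neither kind of congruence: the first carries no power of `q`,
the second involves `ε₁`. The last eight numbers square to `p^b q^{-c}`
with `b ∈ {0, 1}`, `c ∈ {1, 3}`: squaring a congruence with one of them yields the excluded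
relation `εᵢ^{±2} ∈ p^ℤ q^ℤ`, and between two of them `p^ℤ ∩ q^ℤ = {1}` fixes `b`, `c` and the
power of `p`, after which only the sign is left.
-/

theorem zpow_mul_zpow_inj {G₀ : Type*} [CommGroupWithZero G₀] {p q : G₀} (hp : p ≠ 0)
    (hq : q ≠ 0) (hpq : ∀ m n : ℤ, p ^ m = q ^ n → m = 0 ∧ n = 0) {m n m' n' : ℤ}
    (h : p ^ m * q ^ n = p ^ m' * q ^ n') : m = m' ∧ n = n' := by
  have : p ^ (m - m') = q ^ (n' - n) := by
    rw [zpow_sub₀ hp, zpow_sub₀ hq, div_eq_div_iff (zpow_ne_zero _ hp) (zpow_ne_zero _ hq), h,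
      mul_comm]
  have := hpq _ _ this
  omega

theorem prod_zpow_single_add_single {ι G₀ : Type*} [Fintype ι] [DecidableEq ι]
    [CommGroupWithZero G₀] {ε : ι → G₀} (hε : ∀ j, ε j ≠ 0) (i j : ι) (c d : ℤ) :
    ∏ k, ε k ^ (Pi.single i c + Pi.single j d : ι → ℤ) k = ε i ^ c * ε j ^ d := by
  simp only [Pi.add_apply, zpow_add₀ (hε _), Finset.prod_mul_distrib]
  congr 1 <;> simp [Pi.single_apply]

def RelationsFromBalancing (p q : ℂ) (ε : Fin 8 → ℂ) : Prop :=
  ∀ (α : Fin 8 → ℤ) (m n : ℤ), (∏ j, ε j ^ α j) = p ^ m * q ^ n →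
    ∃ a : ℤ, (∀ j : Fin 8, (j : ℕ) < 6 → α j = a) ∧ a = n - α 7 ∧
      α 6 + α 7 = 2 * a ∧ m = 2 * a

theorem HypA.relationsFromBalancing {p q : ℂ} {ε : Fin 8 → ℂ} (h : HypA p q ε) :
    RelationsFromBalancing p q ε := by
  intro α m n hα
  obtain ⟨a, hα, hm, hn⟩ := h α m n hα
  exact ⟨a, fun j _ => hα j, by rw [hα 7]; omega, by rw [hα 6, hα 7]; ring, hm⟩

/-- For `k < 8` these are `±s⁻¹, ±s⁻¹ t, ±s⁻³, ±s⁻³ t` in the order of `polesAndZeros`: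
bit 0 of `k` is the sign, bit 1 the power of `t`, bit 2 selects `s⁻³`. -/
noncomputable def specialPoint (s t : ℂ) (k : ℕ) : ℂ :=
  (-1) ^ (k % 2) * t ^ (k / 2 % 2) / s ^ (2 * (k / 4) + 1)

section SpecialPoint

variable {p q s t : ℂ}

theorem specialPoint_sq (hs : s ^ 2 = q) (ht : t ^ 2 = p) (k : ℕ) :
    specialPoint s t k ^ 2 = p ^ (k / 2 % 2) / q ^ (2 * (k / 4) + 1) := by
  simp only [specialPoint, div_pow, mul_pow, ← pow_mul, ← hs, ← ht]
  rw [mul_comm (k % 2), pow_mul, neg_one_sq, one_pow, one_mul, mul_comm (k / 2 % 2),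
    mul_comm (2 * (k / 4) + 1)]

theorem sq_specialPoint_mul_zpow (hp : p ≠ 0) (hs : s ^ 2 = q) (ht : t ^ 2 = p) (k : ℕ)
    (ℓ : ℤ) : (specialPoint s t k * p ^ ℓ) ^ 2 =
      p ^ (2 * ℓ + (k / 2 % 2 : ℕ)) * q ^ (-((2 * (k / 4) + 1 : ℕ) : ℤ)) := by
  rw [mul_pow, specialPoint_sq hs ht, zpow_add₀ hp, zpow_neg, zpow_natCast, zpow_natCast,
    mul_comm 2 ℓ, zpow_mul, zpow_two, div_eq_mul_inv]
  ring

/-- Bits 1 and 2 of `k` are read off from the square of `specialPoint s t k`, bit 0 from the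
sign. -/
theorem eq_of_specialPoint_eq_mul_zpow (hp : p ≠ 0) (hq : q ≠ 0)
    (hpq : ∀ m n : ℤ, p ^ m = q ^ n → m = 0 ∧ n = 0) (hs : s ^ 2 = q) (ht : t ^ 2 = p)
    {k k' : ℕ} (hk : k < 8) (hk' : k' < 8) {ℓ : ℤ}
    (h : specialPoint s t k = specialPoint s t k' * p ^ ℓ) : k = k' := by
  have hsq := congrArg (· ^ 2) h
  rw [← mul_one (specialPoint s t k), ← zpow_zero p, sq_specialPoint_mul_zpow hp hs ht,
    sq_specialPoint_mul_zpow hp hs ht] at hsq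
  obtain ⟨hb, hc⟩ := zpow_mul_zpow_inj hp hq hpq hsq
  have hℓ : ℓ = 0 := by omega
  have hb' : k / 2 % 2 = k' / 2 % 2 := by omega
  have hc' : k / 4 = k' / 4 := by omega
  have hst : t ^ (k / 2 % 2) / s ^ (2 * (k / 4) + 1) ≠ 0 := by
    have hs0 : s ≠ 0 := by rintro rfl; simp [← hs] at hq
    have ht0 : t ≠ 0 := by rintro rfl; simp [← ht] at hp
    positivity
  rw [hℓ, zpow_zero, mul_one, specialPoint, specialPoint, mul_div_assoc, mul_div_assoc,
    ← hb', ← hc'] at h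
  have hsign := mul_right_cancel₀ hst h
  have : k % 2 = k' % 2 := by
    rcases Nat.mod_two_eq_zero_or_one k with h1 | h1 <;>
      rcases Nat.mod_two_eq_zero_or_one k' with h2 | h2 <;>
      simp only [h1, h2] at hsign ⊢ <;> norm_num at hsign
  omega

end SpecialPoint

namespace RelationsFromBalancing

variable {p q s t : ℂ} {ε : Fin 8 → ℂ}

theorem exists_sum_eq (hR : RelationsFromBalancing p q ε) {α : Fin 8 → ℤ} {m n : ℤ}
    (h : ∏ j, ε j ^ α j = p ^ m * q ^ n) :
    ∃ a : ℤ, (∀ j : Fin 8, (j : ℕ) < 6 → α j = a) ∧ a = n - α 7 ∧ ∑ j, α j = 8 * a := by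
  obtain ⟨a, hsmall, hn, h67, -⟩ := hR α m n h
  refine ⟨a, hsmall, hn, ?_⟩
  rw [Fin.sum_univ_eight, hsmall 0 (by decide), hsmall 1 (by decide),
    hsmall 2 (by decide), hsmall 3 (by decide), hsmall 4 (by decide), hsmall 5 (by decide)]
  linear_combination h67

theorem eight_dvd_add (hR : RelationsFromBalancing p q ε) (hε : ∀ j, ε j ≠ 0) {i j : Fin 8}
    {c d m n : ℤ} (h : ε i ^ c * ε j ^ d = p ^ m * q ^ n) : 8 ∣ c + d := by
  obtain ⟨a, -, -, hsum⟩ := hR.exists_sum_eq (α := Pi.single i c + Pi.single j d)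
    (by rwa [prod_zpow_single_add_single hε])
  refine ⟨a, ?_⟩
  simpa [Finset.sum_add_distrib, Finset.sum_pi_single'] using hsum

theorem eq_of_zpow_mul_zpow_neg (hR : RelationsFromBalancing p q ε) (hε : ∀ j, ε j ≠ 0)
    {i j : Fin 8} {c m n : ℤ} (hc : c ≠ 0) (hn : n = 0 ∨ (i : ℕ) < 6)
    (h : ε i ^ c * ε j ^ (-c) = p ^ m * q ^ n) : i = j := by
  by_contra hij
  set α : Fin 8 → ℤ := Pi.single i c + Pi.single j (-c)
  obtain ⟨a, hsmall, hn7, hsum⟩ :=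
    hR.exists_sum_eq (α := α) (by rwa [prod_zpow_single_add_single hε])
  have ha : a = 0 := by
    simp only [α, Pi.add_apply, Finset.sum_add_distrib, Finset.sum_pi_single',
      Finset.mem_univ, if_true] at hsum
    omega
  have hαi : α i = c := by simp [α, hij]
  have hαj : α j = -c := by simp [α, Ne.symm hij]
  by_cases hi : (i : ℕ) < 6
  · exact hc (by rw [← hαi, hsmall i hi, ha])
  by_cases hj : (j : ℕ) < 6
  · exact hc (by linarith [hsmall j hj])
  -- for `{i, j} = {6, 7}` the exponent of `q` is `a + α 7 = ± c`
  obtain rfl : n = 0 := hn.resolve_right hi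
  obtain ⟨rfl, rfl⟩ | ⟨rfl, rfl⟩ : (i = 6 ∧ j = 7) ∨ (i = 7 ∧ j = 6) := by omega
  all_goals omega

theorem eq_and_eq_of_zpow_mul_zpow_eq (hR : RelationsFromBalancing p q ε)
    (hε : ∀ j, ε j ≠ 0) (hq : q ≠ 0) {i j : Fin 8} {e e' w w' m : ℤ}
    (h : q ^ w * ε i ^ e = q ^ w' * ε j ^ e' * p ^ m)
    (he : e = 1 ∨ e = -1) (he' : e' = 1 ∨ e' = -1) (hw : w = w' ∨ (i : ℕ) < 6) :
    i = j ∧ e = e' := by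
  have hrel : ε i ^ e * ε j ^ (-e') = p ^ m * q ^ (w' - w) := by
    rw [zpow_neg, zpow_sub₀ hq]
    field_simp [zpow_ne_zero _ (hε j), zpow_ne_zero _ hq]
    linear_combination h
  have hee' : e = e' := by have := hR.eight_dvd_add hε hrel; omega
  subst hee'
  exact ⟨hR.eq_of_zpow_mul_zpow_neg hε (by omega) (by omega) hrel, rfl⟩

/-- Squaring turns a congruence with a special point into a relation `ε i ^ (2 e) ∈ p^ℤ q^ℤ`. -/
theorem zpow_mul_zpow_ne_specialPoint_mul (hR : RelationsFromBalancing p q ε)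
    (hε : ∀ j, ε j ≠ 0) (hp : p ≠ 0) (hq : q ≠ 0) (hs : s ^ 2 = q) (ht : t ^ 2 = p)
    {e w ℓ : ℤ} {i : Fin 8} {k : ℕ} (he : ¬ 4 ∣ e) :
    q ^ w * ε i ^ e ≠ specialPoint s t k * p ^ ℓ := by
  intro h
  have hsq := congrArg (· ^ 2) h
  rw [sq_specialPoint_mul_zpow hp hs ht] at hsq
  have hrel : ε i ^ e * ε i ^ e =
      p ^ (2 * ℓ + (k / 2 % 2 : ℕ)) * q ^ (-((2 * (k / 4) + 1 : ℕ) : ℤ) - 2 * w) := by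
    rw [zpow_sub₀ hq, ← mul_div_assoc, ← hsq, mul_comm 2 w, zpow_mul]
    field_simp
  have := hR.eight_dvd_add hε hrel
  omega

end RelationsFromBalancing

section PolesAndZeros

variable {q s t : ℂ} {ε : Fin 8 → ℂ}

theorem polesAndZeros_of_lt_sixteen {i : Fin 24} (hi : (i : ℕ) < 16) :
    polesAndZeros q s t ε i = q⁻¹ * ε ⟨i % 8, by omega⟩ ^ (1 - 2 * (i / 8 : ℕ) : ℤ) := by
  unfold polesAndZeros
  split_ifs with h8
  · simp [Nat.mod_eq_of_lt h8, Nat.div_eq_of_lt h8]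
  · have h1 : (i : ℕ) / 8 = 1 := by omega
    have h2 : (i : ℕ) % 8 = i - 8 := by omega
    simp only [h1, h2]; norm_num

theorem polesAndZeros_of_sixteen_le {i : Fin 24} (hi : 16 ≤ (i : ℕ)) :
    polesAndZeros q s t ε i = specialPoint s t (i - 16) := by
  have hvec : ∀ k : Fin 8, ![s⁻¹, -s⁻¹, s⁻¹ * t, -(s⁻¹ * t), (s ^ 3)⁻¹, -(s ^ 3)⁻¹,
      (s ^ 3)⁻¹ * t, -((s ^ 3)⁻¹ * t)] k = specialPoint s t k := by
    intro k; fin_cases k <;> simp [specialPoint] <;> ring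
  unfold polesAndZeros
  rw [dif_neg (by omega), dif_neg (by omega)]
  exact hvec _

variable {p : ℂ}

theorem polesAndZeros_ne_mul_zpow (hR : RelationsFromBalancing p q ε) (hε : ∀ j, ε j ≠ 0)
    (hp : p ≠ 0) (hq : q ≠ 0) (hpq : ∀ m n : ℤ, p ^ m = q ^ n → m = 0 ∧ n = 0)
    (hs : s ^ 2 = q) (ht : t ^ 2 = p) {i j : Fin 24} (hij : i ≠ j) (ℓ : ℤ) :
    polesAndZeros q s t ε i ≠ polesAndZeros q s t ε j * p ^ ℓ := by
  intro h
  have hsymm : ∀ {x y : ℂ} {ℓ : ℤ}, x = y * p ^ ℓ → y = x * p ^ (-ℓ) := fun h => by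
    rw [zpow_neg, eq_mul_inv_iff_mul_eq₀ (zpow_ne_zero _ hp), h]
  rcases lt_or_ge (i : ℕ) 16 with hi | hi <;> rcases lt_or_ge (j : ℕ) 16 with hj | hj
  · rw [polesAndZeros_of_lt_sixteen hi, polesAndZeros_of_lt_sixteen hj, ← zpow_neg_one] at h
    obtain ⟨hij', he⟩ :=
      hR.eq_and_eq_of_zpow_mul_zpow_eq hε hq h (by omega) (by omega) (Or.inl rfl)
    exact hij (Fin.ext (by simp only [Fin.mk.injEq] at hij'; omega))
  · rw [polesAndZeros_of_lt_sixteen hi, polesAndZeros_of_sixteen_le hj, ← zpow_neg_one] at h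
    exact hR.zpow_mul_zpow_ne_specialPoint_mul hε hp hq hs ht (by omega) h
  · rw [polesAndZeros_of_sixteen_le hi, polesAndZeros_of_lt_sixteen hj, ← zpow_neg_one] at h
    exact hR.zpow_mul_zpow_ne_specialPoint_mul hε hp hq hs ht (by omega) (hsymm h)
  · rw [polesAndZeros_of_sixteen_le hi, polesAndZeros_of_sixteen_le hj] at h
    have := eq_of_specialPoint_eq_mul_zpow hp hq hpq hs ht (by omega) (by omega) h
    exact hij (Fin.ext (by omega))

theorem qpow_mul_ne_polesAndZeros_mul_zpow (hR : RelationsFromBalancing p q ε)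
    (hε : ∀ j, ε j ≠ 0) (hp : p ≠ 0) (hq : q ≠ 0)
    (hpq : ∀ m n : ℤ, p ^ m = q ^ n → m = 0 ∧ n = 0) (hs : s ^ 2 = q) (ht : t ^ 2 = p)
    {ℓ : ℤ} (hℓ : ℓ ≠ 0) (i : Fin 24) (n : ℤ) :
    q ^ (ℓ - 1) * ε 0 ≠ polesAndZeros q s t ε i * p ^ n := by
  intro h
  rw [← zpow_one (ε 0)] at h
  rcases lt_or_ge (i : ℕ) 16 with hi | hi
  · rw [polesAndZeros_of_lt_sixteen hi, ← zpow_neg_one] at h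
    obtain ⟨hi0, he⟩ :=
      hR.eq_and_eq_of_zpow_mul_zpow_eq hε hq h (Or.inl rfl) (by omega) (Or.inr (by decide))
    rw [← hi0, ← he, mul_right_comm, mul_left_inj' (zpow_ne_zero _ (hε 0)),
      zpow_sub_one₀ hq, zpow_neg_one, mul_comm q⁻¹, mul_left_inj' (inv_ne_zero hq)] at h
    exact hℓ (hpq n ℓ h.symm).2
  · rw [polesAndZeros_of_sixteen_le hi] at h
    exact hR.zpow_mul_zpow_ne_specialPoint_mul hε hp hq hs ht (by norm_num) h

end PolesAndZeros

theorem elliptic_hypergeometric_poles_distinct_general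
    (p q : ℂ) (ε : Fin 8 → ℂ)
    (hp0 : p ≠ 0)
    (hq0 : q ≠ 0)
    (hpq : ∀ m n : ℤ, p ^ m = q ^ n → m = 0 ∧ n = 0)
    (hε : ∀ j, ε j ≠ 0)
    (hAB : HypA p q ε ∨ HypB p q ε)
    (s t : ℂ) (hs : s ^ 2 = q) (ht : t ^ 2 = p) :
    (∀ i j : Fin 24, i ≠ j → ∀ ℓ : ℤ,
      polesAndZeros q s t ε i ≠ polesAndZeros q s t ε j * p ^ ℓ) ∧
    (∀ ℓ : ℤ, ℓ ≠ 0 → ∀ (i : Fin 24) (n : ℤ),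
      q ^ (ℓ - 1) * ε 0 ≠ polesAndZeros q s t ε i * p ^ n) := by
  have hR : RelationsFromBalancing p q ε := hAB.elim HypA.relationsFromBalancing And.right
  exact ⟨fun i j hij ℓ => polesAndZeros_ne_mul_zpow hR hε hp0 hq0 hpq hs ht hij ℓ,
    fun ℓ hℓ i n => qpow_mul_ne_polesAndZeros_mul_zpow hR hε hp0 hq0 hpq hs ht hℓ i n⟩

/-- Under hypothesis (A) or (B), the 24 numbers `q⁻¹ εⱼ^{±1}`, `±s⁻¹`, `±s⁻¹ t`,
`±s⁻³`, `±s⁻³ t` are pairwise distinct modulo `p^ℤ`, and for every nonzero integer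
`ℓ`, the number `q^{ℓ-1} ε₁` is not congruent modulo `p^ℤ` to any of them. -/
theorem elliptic_hypergeometric_poles_distinct
    (p q : ℂ) (ε : Fin 8 → ℂ)
    (hp0 : p ≠ 0) (hp1 : ‖p‖ < 1)
    (hq0 : q ≠ 0) (hq1 : ‖q‖ < 1)
    (hpq : ∀ m n : ℤ, p ^ m = q ^ n → m = 0 ∧ n = 0)
    (hε : ∀ j, ε j ≠ 0)
    (hbal : (∏ j, ε j) = p ^ 2 * q ^ 2)
    (hAB : HypA p q ε ∨ HypB p q ε)
    (s t : ℂ) (hs : s ^ 2 = q) (ht : t ^ 2 = p) :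
    (∀ i j : Fin 24, i ≠ j → ∀ ℓ : ℤ,
      polesAndZeros q s t ε i ≠ polesAndZeros q s t ε j * p ^ ℓ) ∧
    (∀ ℓ : ℤ, ℓ ≠ 0 → ∀ (i : Fin 24) (n : ℤ),
      q ^ (ℓ - 1) * ε 0 ≠ polesAndZeros q s t ε i * p ^ n) :=
  elliptic_hypergeometric_poles_distinct_general p q ε hp0 hq0 hpq hε hAB s t hs ht
end

section
/- Let p ∈ ℂ with 0 < |p| < 1. Then the function z ↦ θ(z;p) is analytic on ℂ∖{0}; it vanishes at z ∈ ℂ∖{0} if and only if z = p^n for some n ∈ ℤ; and each such zero is simple, i.e., the order of vanishing of θ(·;p) at each point p^n (n ∈ ℤ) equals 1. -/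
/-!
Splitting off finitely many factors, `(z;p)_∞ = ∏_{i<N} (1 - z pⁱ) · (z p^N;p)_∞`, and the
tail has no zeros as soon as `‖z p^N‖ < 1`. Hence `(·;p)_∞` is entire (a locally uniform limit
of polynomials) and vanishes exactly at the points `p⁻ᵏ`, `k ≥ 0`, each time through the single
linear factor `1 - z pᵏ`, so simply. Since `z ↦ p/z` has nonzero derivative on `ℂ ∖ {0}`, the
order of `θ(·;p)` at `z` is the order of `(·;p)_∞` at `z` plus its order at `p/z`; for `z = pⁿ`
exactly one of `n ≤ 0` and `1 - n ≤ 0` holds.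
-/

/-- The infinite `p`-Pochhammer product `(z;p)_∞ = ∏_{j ≥ 0} (1 - z pʲ)`. -/
noncomputable def poch (p z : ℂ) : ℂ := ∏' j : ℕ, (1 - z * p ^ j)

/-- The theta function `θ(z;p) = (z;p)_∞ (p z⁻¹;p)_∞`. -/
noncomputable def theta (p z : ℂ) : ℂ := poch p z * poch p (p * z⁻¹)

open Finset Metric

namespace Theta

variable {p : ℂ}

lemma summable_norm_mul_pow (hp1 : ‖p‖ < 1) (z : ℂ) : Summable fun j : ℕ ↦ ‖z * p ^ j‖ := by
  simpa [norm_mul, norm_pow] using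
    (summable_geometric_of_lt_one (norm_nonneg p) hp1).mul_left ‖z‖

lemma multipliable_one_sub_mul_pow (hp1 : ‖p‖ < 1) (z : ℂ) :
    Multipliable fun j : ℕ ↦ 1 - z * p ^ j := by
  simpa [sub_eq_add_neg] using
    multipliable_one_add_of_summable (f := fun j : ℕ ↦ -(z * p ^ j))
      (by simpa using summable_norm_mul_pow hp1 z)

lemma poch_eq_prod_range_mul (hp1 : ‖p‖ < 1) (z : ℂ) (N : ℕ) :
    poch p z = (∏ i ∈ range N, (1 - z * p ^ i)) * poch p (z * p ^ N) := by
  have htail : (fun i : ℕ ↦ 1 - z * p ^ (i + N)) = fun i ↦ 1 - z * p ^ N * p ^ i := by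
    ext i; ring
  rw [poch, poch, ← Multipliable.prod_mul_tprod_nat_mul' (k := N), htail]
  exact htail ▸ multipliable_one_sub_mul_pow hp1 _

lemma poch_ne_zero (hp1 : ‖p‖ < 1) {z : ℂ} (hz : ‖z‖ < 1) : poch p z ≠ 0 := by
  have hsmall (j : ℕ) : ‖z * p ^ j‖ < 1 := by
    rw [norm_mul, norm_pow]
    exact mul_lt_one_of_nonneg_of_lt_one_left (norm_nonneg z) hz
      (pow_le_one₀ (norm_nonneg p) hp1.le)
  simpa [poch, sub_eq_add_neg] using
    tprod_one_add_ne_zero_of_summable (f := fun j : ℕ ↦ -(z * p ^ j))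
      (fun j ↦ by
        rw [← sub_eq_add_neg, sub_ne_zero]
        exact fun h ↦ (hsmall j).ne' (by rw [← h, norm_one]))
      (by simpa using summable_norm_mul_pow hp1 z)

lemma differentiable_poch (hp1 : ‖p‖ < 1) : Differentiable ℂ (poch p) := by
  intro z
  have hgeom := (summable_geometric_of_lt_one (norm_nonneg p) hp1).mul_left (‖z‖ + 1)
  have hprod : HasProdLocallyUniformlyOn (fun j w ↦ 1 + -(w * p ^ j))
      (fun w ↦ ∏' j, (1 + -(w * p ^ j))) (ball 0 (‖z‖ + 1)) :=
    hgeom.hasProdLocallyUniformlyOn_nat_one_add isOpen_ball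
      (.of_forall fun j w hw ↦ by
        rw [norm_neg, norm_mul, norm_pow]
        exact mul_le_mul_of_nonneg_right (mem_ball_zero_iff.mp hw).le (by positivity))
      (fun j ↦ by fun_prop)
  have hdiff := hprod.differentiableOn (.of_forall fun s ↦ by fun_prop) isOpen_ball
  simp only [← sub_eq_add_neg] at hdiff
  exact hdiff.differentiableAt (isOpen_ball.mem_nhds (by simp))

lemma analyticAt_poch (hp1 : ‖p‖ < 1) (z : ℂ) : AnalyticAt ℂ (poch p) z :=
  (differentiable_poch hp1).analyticAt z

lemma exists_norm_mul_pow_lt_one (hp1 : ‖p‖ < 1) (z : ℂ) : ∃ N : ℕ, ‖z * p ^ N‖ < 1 :=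
  ((tendsto_pow_atTop_nhds_zero_of_norm_lt_one hp1).const_mul z).norm.eventually
    (gt_mem_nhds (by simp)) |>.exists

lemma pow_ne_one_of_norm_lt_one (hp1 : ‖p‖ < 1) {k : ℕ} (hk : k ≠ 0) : p ^ k ≠ 1 := fun h ↦ by
  have := pow_lt_one₀ (norm_nonneg p) hp1 hk
  rw [← norm_pow, h, norm_one] at this
  exact this.false

lemma analyticOrderAt_one_sub_mul {c : ℂ} (hc : c ≠ 0) :
    analyticOrderAt (fun z ↦ 1 - z * c) c⁻¹ = 1 := by
  refine AnalyticAt.analyticOrderAt_eq_one_of_zero_deriv_ne_zero (by fun_prop)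
    (by simp [hc]) ?_
  rw [((hasDerivAt_id' c⁻¹).mul_const c).const_sub 1 |>.deriv]
  simpa using hc

lemma analyticOrderAt_poch_inv_pow (hp0 : p ≠ 0) (hp1 : ‖p‖ < 1) (k : ℕ) :
    analyticOrderAt (poch p) (p ^ k)⁻¹ = 1 := by
  set rest : ℂ → ℂ := fun z ↦ (∏ i ∈ range k, (1 - z * p ^ i)) * poch p (z * p ^ (k + 1))
  have hsplit : poch p = (fun z ↦ 1 - z * p ^ k) * rest := by
    ext z
    simp only [Pi.mul_apply, rest]
    rw [poch_eq_prod_range_mul hp1 z (k + 1), prod_range_succ]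
    ring
  have hrest : rest (p ^ k)⁻¹ ≠ 0 := by
    refine mul_ne_zero (prod_ne_zero_iff.mpr fun i hi ↦ ?_) (poch_ne_zero hp1 ?_)
    · rw [sub_ne_zero, ne_comm, ← pow_sub_mul_pow p (mem_range.mp hi).le, mul_inv,
        inv_mul_cancel_right₀ (pow_ne_zero i hp0), inv_ne_one]
      exact pow_ne_one_of_norm_lt_one hp1 (Nat.sub_ne_zero_of_lt (mem_range.mp hi))
    · rwa [pow_succ, inv_mul_cancel_left₀ (pow_ne_zero k hp0)]
  have hrest_an : AnalyticAt ℂ rest (p ^ k)⁻¹ := by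
    have := analyticAt_poch hp1 ((p ^ k)⁻¹ * p ^ (k + 1))
    fun_prop
  rw [hsplit, analyticOrderAt_mul (by fun_prop) hrest_an,
    analyticOrderAt_one_sub_mul (pow_ne_zero k hp0), hrest_an.analyticOrderAt_eq_zero.mpr hrest,
    add_zero]

lemma analyticOrderAt_poch_zpow_of_nonpos (hp0 : p ≠ 0) (hp1 : ‖p‖ < 1) {n : ℤ} (hn : n ≤ 0) :
    analyticOrderAt (poch p) (p ^ n) = 1 := by
  obtain ⟨k, rfl⟩ := Int.exists_eq_neg_ofNat hn
  rw [zpow_neg, zpow_natCast]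
  exact analyticOrderAt_poch_inv_pow hp0 hp1 k

lemma analyticOrderAt_poch_zpow_of_pos (hp0 : p ≠ 0) (hp1 : ‖p‖ < 1) {n : ℤ} (hn : 0 < n) :
    analyticOrderAt (poch p) (p ^ n) = 0 :=
  (analyticAt_poch hp1 _).analyticOrderAt_eq_zero.mpr <| poch_ne_zero hp1 <| by
    rw [norm_zpow]
    exact zpow_lt_one₀ (norm_pos_iff.mpr hp0) hp1 hn

lemma poch_eq_zero_iff (hp0 : p ≠ 0) (hp1 : ‖p‖ < 1) {z : ℂ} :
    poch p z = 0 ↔ ∃ n : ℤ, n ≤ 0 ∧ z = p ^ n := by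
  constructor
  · intro hz
    obtain ⟨N, hN⟩ := exists_norm_mul_pow_lt_one hp1 z
    rw [poch_eq_prod_range_mul hp1 z N, mul_eq_zero, prod_eq_zero_iff,
      or_iff_left (poch_ne_zero hp1 hN)] at hz
    obtain ⟨i, -, hi⟩ := hz
    refine ⟨-i, by omega, ?_⟩
    rw [zpow_neg, zpow_natCast]
    exact eq_inv_of_mul_eq_one_left (sub_eq_zero.mp hi).symm
  · rintro ⟨n, hn, rfl⟩
    exact apply_eq_zero_of_analyticOrderAt_ne_zero
      (by simp [analyticOrderAt_poch_zpow_of_nonpos hp0 hp1 hn])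

lemma mul_inv_eq_zpow_iff (hp0 : p ≠ 0) {z : ℂ} (hz : z ≠ 0) (n : ℤ) :
    p * z⁻¹ = p ^ n ↔ z = p ^ (1 - n) := by
  rw [mul_inv_eq_iff_eq_mul₀ hz, zpow_sub₀ hp0, zpow_one, eq_div_iff (zpow_ne_zero n hp0),
    eq_comm, mul_comm]

lemma theta_eq_zero_iff (hp0 : p ≠ 0) (hp1 : ‖p‖ < 1) {z : ℂ} (hz : z ≠ 0) :
    theta p z = 0 ↔ ∃ n : ℤ, z = p ^ n := by
  simp only [theta, mul_eq_zero, poch_eq_zero_iff hp0 hp1, mul_inv_eq_zpow_iff hp0 hz]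
  constructor
  · rintro (⟨n, -, h⟩ | ⟨n, -, h⟩)
    exacts [⟨n, h⟩, ⟨1 - n, h⟩]
  · rintro ⟨n, rfl⟩
    rcases le_or_gt n 0 with hn | hn
    · exact .inl ⟨n, hn, rfl⟩
    · exact .inr ⟨1 - n, by omega, by rw [sub_sub_cancel]⟩

lemma analyticAt_theta (hp1 : ‖p‖ < 1) {z : ℂ} (hz : z ≠ 0) : AnalyticAt ℂ (theta p) z :=
  (analyticAt_poch hp1 z).mul ((analyticAt_poch hp1 _).comp (by fun_prop))

lemma analyticOrderAt_theta (hp0 : p ≠ 0) (hp1 : ‖p‖ < 1) {z : ℂ} (hz : z ≠ 0) :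
    analyticOrderAt (theta p) z =
      analyticOrderAt (poch p) z + analyticOrderAt (poch p) (p * z⁻¹) := by
  have hderiv : deriv (fun w ↦ p * w⁻¹) z ≠ 0 := by
    rw [((hasDerivAt_inv hz).const_mul p).deriv]
    simp [hp0, hz]
  change analyticOrderAt (poch p * (poch p ∘ fun w ↦ p * w⁻¹)) z = _
  rw [analyticOrderAt_mul (analyticAt_poch hp1 z) ((analyticAt_poch hp1 _).comp (by fun_prop)),
    analyticOrderAt_comp_of_deriv_ne_zero (by fun_prop) hderiv]

end Theta

open Theta in
/-- For `0 < |p| < 1`, the theta function `θ(·;p)` is analytic on `ℂ ∖ {0}`, vanishes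
exactly at the points `pⁿ` for `n ∈ ℤ`, and each of these zeros is simple. -/
theorem theta_zeros_simple
    (p : ℂ) (hp0 : p ≠ 0) (hp1 : ‖p‖ < 1) :
    (∀ z : ℂ, z ≠ 0 → AnalyticAt ℂ (theta p) z) ∧
    (∀ z : ℂ, z ≠ 0 → (theta p z = 0 ↔ ∃ n : ℤ, z = p ^ n)) ∧
    (∀ (n : ℤ) (h : AnalyticAt ℂ (theta p) (p ^ n)), analyticOrderAt (theta p) (p ^ n) = 1) := by
  refine ⟨fun z hz ↦ analyticAt_theta hp1 hz, fun z hz ↦ theta_eq_zero_iff hp0 hp1 hz,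
    fun n _ ↦ ?_⟩
  have hdual : p * (p ^ n)⁻¹ = p ^ (1 - n) := by
    rw [mul_inv_eq_zpow_iff hp0 (zpow_ne_zero n hp0), sub_sub_cancel]
  rw [analyticOrderAt_theta hp0 hp1 (zpow_ne_zero n hp0), hdual]
  rcases le_or_gt n 0 with hn | hn
  · rw [analyticOrderAt_poch_zpow_of_nonpos hp0 hp1 hn,
      analyticOrderAt_poch_zpow_of_pos hp0 hp1 (by omega), add_zero]
  · rw [analyticOrderAt_poch_zpow_of_pos hp0 hp1 hn,
      analyticOrderAt_poch_zpow_of_nonpos hp0 hp1 (by omega), zero_add]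
end
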